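/- Let H(C) = ⟨C[1], M(C)⟩. If M(C) = M(C'') and C[1] = C''[1], then for every pair ⟨c', m'⟩, Σ_{C' : H(C') = ⟨c',m'⟩} P_{C,C'} = Σ_{C' : H(C') = ⟨c',m'⟩} P_{C'',C'}. Hence the projected transition matrix H^(N)_{⟨c,m⟩,⟨c',m'⟩} = Σ_{C': H(C')=⟨c',m'⟩} P_{C,C'} (for any C with H(C)=⟨c,m⟩) is well-defined. -/

import Mathlib

/-!
Configurations with the same occupancy measure differ by a relabelling `σ` of the agents, and
when they also share their first agent's state, `σ` can be chosen to fix that agent. Relabelling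
all configurations by `σ` preserves the transition probabilities `P` and the projection `H`, so
`C' ↦ C' ∘ σ` matches the two sums term by term.
-/

open scoped Classical
open Finset Equiv

section FiberPermutation

variable {α S : Type*} [Fintype α]

theorem exists_perm_comp_eq_of_card_fiber_eq (f g : α → S)
    (h : ∀ c, #{a | f a = c} = #{a | g a = c}) : ∃ σ : Perm α, f ∘ σ = g := by
  have e : ∀ c, {a // g a = c} ≃ {a // f a = c} := fun c =>
    Fintype.equivOfCardEq (by simp only [Fintype.card_subtype, h])
  refine ⟨(sigmaFiberEquiv g).symm.trans ((sigmaCongrRight e).trans (sigmaFiberEquiv f)),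
    funext fun a => ?_⟩
  exact (e (g a) ⟨a, rfl⟩).2

theorem exists_perm_fixing_comp_eq_of_card_fiber_eq (f g : α → S) (a₀ : α)
    (h₀ : f a₀ = g a₀) (h : ∀ c, #{a | f a = c} = #{a | g a = c}) :
    ∃ σ : Perm α, σ a₀ = a₀ ∧ f ∘ σ = g := by
  -- Tagging each point with whether it is `a₀` makes "fixes `a₀`" part of matching the fibers.
  have at_a₀ : ∀ c, #{a | f a = c ∧ a = a₀} = #{a | g a = c ∧ a = a₀} := fun c => by
    congr 1
    exact filter_congr fun a _ => by constructor <;> rintro ⟨_, rfl⟩ <;> simp_all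
  have off_a₀ : ∀ c, #{a | f a = c ∧ ¬a = a₀} = #{a | g a = c ∧ ¬a = a₀} := fun c => by
    have hf := card_filter_add_card_filter_not (s := {a | f a = c}) (· = a₀)
    have hg := card_filter_add_card_filter_not (s := {a | g a = c}) (· = a₀)
    simp only [filter_filter] at hf hg
    rw [at_a₀, h] at hf
    omega
  obtain ⟨σ, hσ⟩ := exists_perm_comp_eq_of_card_fiber_eq
    (fun a => (f a, decide (a = a₀))) (fun a => (g a, decide (a = a₀))) fun ⟨c, b⟩ => by
      cases b <;> simp [at_a₀, off_a₀]
  refine ⟨σ, ?_, funext fun a => congrArg Prod.fst (congrFun hσ a)⟩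
  simpa using congrArg Prod.snd (congrFun hσ a₀)

end FiberPermutation

section Configuration

variable {S : Type*} {N : ℕ}

theorem card_fiber_eq_of_occupancy_eq (hN : N ≠ 0) {M : (Fin N → S) → S → ℝ}
    (hM : ∀ C c, M C c = (1 / (N : ℝ)) * ∑ n : Fin N, if C n = c then 1 else 0)
    {C C'' : Fin N → S} (h : M C = M C'') (c : S) : #{n | C n = c} = #{n | C'' n = c} := by
  have hc := congrFun h c
  simp only [hM, sum_boole] at hc
  exact_mod_cast mul_left_cancel₀ (by positivity) hc

theorem occupancy_comp_perm {M : (Fin N → S) → S → ℝ}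
    (hM : ∀ C c, M C c = (1 / (N : ℝ)) * ∑ n : Fin N, if C n = c then 1 else 0)
    (C : Fin N → S) (σ : Perm (Fin N)) : M (C ∘ σ) = M C := by
  funext c
  simp only [hM, Function.comp_apply, Equiv.sum_comp σ (fun n => if C n = c then (1 : ℝ) else 0)]

theorem transition_comp_perm {K : (S → ℝ) → S → S → ℝ} {M : (Fin N → S) → S → ℝ}
    (hM : ∀ C c, M C c = (1 / (N : ℝ)) * ∑ n : Fin N, if C n = c then 1 else 0)
    {P : (Fin N → S) → (Fin N → S) → ℝ} (hP : ∀ C C', P C C' = ∏ n : Fin N, K (M C) (C n) (C' n))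
    (C C' : Fin N → S) (σ : Perm (Fin N)) : P (C ∘ σ) (C' ∘ σ) = P C C' := by
  simp only [hP, occupancy_comp_perm hM, Function.comp_apply,
    Equiv.prod_comp σ (fun n => K (M C) (C n) (C' n))]

end Configuration

/-- the projected transition matrix
`H^(N)_{⟨c,m⟩,⟨c',m'⟩} = Σ_{C' : H(C')=⟨c',m'⟩} P_{C,C'}` is well-defined:
it does not depend on the representative `C` with `H(C) = ⟨c,m⟩`. -/
theorem stmt_5 {S : Type*} [Fintype S] (N : ℕ) (hN : 0 < N)
    (K : (S → ℝ) → S → S → ℝ)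
    (M : (Fin N → S) → (S → ℝ))
    (hM : ∀ C c, M C c = (1 / (N : ℝ)) * ∑ n : Fin N, if C n = c then 1 else 0)
    (P : (Fin N → S) → (Fin N → S) → ℝ)
    (hP : ∀ C C', P C C' = ∏ n : Fin N, K (M C) (C n) (C' n))
    (H : (Fin N → S) → S × (S → ℝ))
    (hH : ∀ C, H C = (C ⟨0, hN⟩, M C))
    (C C'' : Fin N → S)
    (hMeq : M C = M C'') (hfst : C ⟨0, hN⟩ = C'' ⟨0, hN⟩) :
    ∀ (c' : S) (m' : S → ℝ),
      ∑ C' ∈ Finset.univ.filter (fun C' : Fin N → S => H C' = (c', m')), P C C' =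
      ∑ C' ∈ Finset.univ.filter (fun C' : Fin N → S => H C' = (c', m')), P C'' C' := by
  intro c' m'
  obtain ⟨σ, hσ₀, rfl⟩ := exists_perm_fixing_comp_eq_of_card_fiber_eq C C'' ⟨0, hN⟩ hfst
    (card_fiber_eq_of_occupancy_eq hN.ne' hM hMeq)
  have hH_comp : ∀ C', H (C' ∘ σ) = H C' := fun C' => by
    rw [hH, hH, occupancy_comp_perm hM, Function.comp_apply, hσ₀]
  refine sum_equiv (σ.symm.arrowCongr (Equiv.refl S)) (fun C' => ?_) (fun C' _ => ?_)
  · change _ ↔ C' ∘ σ ∈ _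
    simp only [mem_filter_univ, hH_comp]
  · exact (transition_comp_perm hM hP C C' σ).symm
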